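/- Let v : ℝ^{d_x} → ℝ be three times continuously differentiable, let b : ℝ^{d_x} → ℝ^{d_x}, G : ℝ^{d_x} → ℝ^{d_x × d_u}, and h : ℝ^{d_x} → ℝ^{d_y} be continuously differentiable, let c : ℝ^{d_x} → ℝ be continuously differentiable, let U ∈ ℝ^{d_u} and m ∈ ℝ^{d_y} be fixed vectors, let C ∈ ℝ^{d_x × d_y} be a fixed matrix, let R be a symmetric positive-definite real d_y × d_y matrix, let Σ be a constant symmetric real d_x × d_x matrix, and let γ ∈ ℝ. Write f(x) := b(x) + G(x) U − (1/2) C R⁻¹ (h(x) − m) and ψ := ∇v. If γ v(x) = f(x)ᵀ ∇v(x) + (1/2) Σ : D²v(x) + (1/2)‖U‖² + c(x) for all x ∈ ℝ^{d_x}, then for all x: γ ψ(x) = (D f(x))ᵀ ψ(x) + (D ψ(x)) f(x) + ∇c(x) + (1/2) ∇( ∇·(Σ ψ) )(x). -/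

import Mathlib

open Matrix

/-- `i`-th partial derivative of a scalar function on `ℝⁿ`. -/
noncomputable def pd {n : ℕ} (f : (Fin n → ℝ) → ℝ) (i : Fin n) (x : Fin n → ℝ) : ℝ :=
  fderiv ℝ f x (Pi.single i 1)

/-- Gradient of a scalar function on `ℝⁿ`. -/
noncomputable def gradv {n : ℕ} (f : (Fin n → ℝ) → ℝ) (x : Fin n → ℝ) : Fin n → ℝ :=
  fun i => pd f i x

/-- Hessian matrix entries of a scalar function on `ℝⁿ`. -/
noncomputable def hess {n : ℕ} (f : (Fin n → ℝ) → ℝ) (x : Fin n → ℝ) (i j : Fin n) : ℝ :=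
  pd (fun y => pd f i y) j x

/-- Divergence of a vector field on `ℝⁿ`. -/
noncomputable def divv {n : ℕ} (g : (Fin n → ℝ) → (Fin n → ℝ)) (x : Fin n → ℝ) : ℝ :=
  ∑ i, pd (fun y => g y i) i x

/-! Differentiate the stationary HJB equation in the coordinate direction `eᵢ`. The product rule
applied to `f ⬝ᵥ ∇v` gives `(Df)ᵀψ` plus `(D²v) f`, and `(D²v) f = (Dψ) f` by Schwarz's theorem.
Schwarz's theorem also gives `Σ : D²v = ∇·(Σ ∇v)` for every matrix `Σ`, so the second-order term
differentiates to `(1/2) ∇(∇·(Σψ))`. -/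

theorem ContDiff.matrix_mulVec {𝕜 E m n : Type*} [NontriviallyNormedField 𝕜]
    [NormedAddCommGroup E] [NormedSpace 𝕜 E] [Fintype m] [Fintype n] {k : WithTop ℕ∞}
    {A : E → Matrix m n 𝕜} {w : E → n → 𝕜}
    (hA : ∀ i j, ContDiff 𝕜 k fun x => A x i j) (hw : ContDiff 𝕜 k w) :
    ContDiff 𝕜 k fun x => A x *ᵥ w x :=
  contDiff_pi.2 fun i => ContDiff.sum fun j _ => (hA i j).mul (contDiff_pi.1 hw j)

section PartialDerivatives

variable {n : ℕ} {f g : (Fin n → ℝ) → ℝ} {x : Fin n → ℝ}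

lemma pd_add (hf : DifferentiableAt ℝ f x) (hg : DifferentiableAt ℝ g x) (i : Fin n) :
    pd (fun y => f y + g y) i x = pd f i x + pd g i x := by
  simp [pd, fderiv_fun_add hf hg]

lemma pd_mul (hf : DifferentiableAt ℝ f x) (hg : DifferentiableAt ℝ g x) (i : Fin n) :
    pd (fun y => f y * g y) i x = f x * pd g i x + g x * pd f i x := by
  simp [pd, fderiv_fun_mul hf hg]

lemma pd_const_mul (a : ℝ) (hg : DifferentiableAt ℝ g x) (i : Fin n) :
    pd (fun y => a * g y) i x = a * pd g i x := by
  simp [pd, fderiv_const_mul hg a]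

lemma pd_const (a : ℝ) (i : Fin n) : pd (fun _ => a) i x = 0 := by
  simp [pd]

lemma pd_sum {κ : Type*} (s : Finset κ) {A : κ → (Fin n → ℝ) → ℝ}
    (hA : ∀ j ∈ s, DifferentiableAt ℝ (A j) x) (i : Fin n) :
    pd (fun y => ∑ j ∈ s, A j y) i x = ∑ j ∈ s, pd (A j) i x := by
  simp [pd, fderiv_fun_sum hA]

lemma contDiff_pd {m : WithTop ℕ∞} (hf : ContDiff ℝ (m + 1) f) (i : Fin n) :
    ContDiff ℝ m (pd f i) :=
  (hf.fderiv_right le_rfl).clm_apply contDiff_const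

lemma contDiff_hess {m : WithTop ℕ∞} (hf : ContDiff ℝ (m + 2) f) (i j : Fin n) :
    ContDiff ℝ m fun y => hess f y i j :=
  contDiff_pd (contDiff_pd (by rwa [add_assoc, one_add_one_eq_two]) i) j

lemma hess_symm (hf : ContDiff ℝ 2 f) (x : Fin n → ℝ) (i j : Fin n) :
    hess f x i j = hess f x j i := by
  have hdf : DifferentiableAt ℝ (fderiv ℝ f) x :=
    ((hf.fderiv_right (m := 1) (by norm_num)).differentiable one_ne_zero).differentiableAt
  have hess_eq : ∀ a b : Fin n,
      hess f x a b = fderiv ℝ (fderiv ℝ f) x (Pi.single b 1) (Pi.single a 1) := fun a b => by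
    simp [hess, pd, fderiv_clm_apply hdf (differentiableAt_const _)]
  rw [hess_eq, hess_eq, hf.contDiffAt.isSymmSndFDerivAt (by simp)]

end PartialDerivatives

section CoState

variable {n : ℕ} {v : (Fin n → ℝ) → ℝ}

lemma divv_mulVec_gradv (hv : ContDiff ℝ 2 v) (S : Matrix (Fin n) (Fin n) ℝ) (x : Fin n → ℝ) :
    divv (fun z => S *ᵥ gradv v z) x = ∑ i, ∑ j, S i j * hess v x i j := by
  have hd : ∀ j, Differentiable ℝ fun y => gradv v y j := fun j =>
    (contDiff_pd (m := 1) hv j).differentiable one_ne_zero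
  refine Finset.sum_congr rfl fun i _ => ?_
  simp only [mulVec, dotProduct]
  rw [pd_sum (A := fun j y => S i j * gradv v y j) _ (fun j _ => (hd j x).const_mul _)]
  refine Finset.sum_congr rfl fun j _ => ?_
  rw [pd_const_mul _ (hd j x), hess_symm hv]
  rfl

lemma pd_dotProduct_gradv {F : (Fin n → ℝ) → Fin n → ℝ} {x : Fin n → ℝ}
    (hF : DifferentiableAt ℝ F x) (hv : ContDiff ℝ 2 v) (i : Fin n) :
    pd (fun y => F y ⬝ᵥ gradv v y) i x =
      (∑ j, pd (fun y => F y j) i x * gradv v x j)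
        + ∑ j, pd (fun y => gradv v y i) j x * F x j := by
  have hFj : ∀ j, DifferentiableAt ℝ (fun y => F y j) x := differentiableAt_pi.1 hF
  have hd : ∀ j, DifferentiableAt ℝ (fun y => gradv v y j) x := fun j =>
    (contDiff_pd (m := 1) hv j).differentiable one_ne_zero x
  simp only [dotProduct]
  rw [pd_sum (A := fun j y => F y j * gradv v y j) _ (fun j _ => (hFj j).mul (hd j)),
    ← Finset.sum_add_distrib]
  refine Finset.sum_congr rfl fun j _ => ?_
  have hsymm : pd (fun y => gradv v y j) i x = pd (fun y => gradv v y i) j x :=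
    hess_symm hv x j i
  rw [pd_mul (hFj j) (hd j), hsymm]
  ring

lemma costate_eq_of_hjb {F : (Fin n → ℝ) → Fin n → ℝ} {c : (Fin n → ℝ) → ℝ}
    {S : Matrix (Fin n) (Fin n) ℝ} {γ K : ℝ} {x : Fin n → ℝ} (hv : ContDiff ℝ 3 v)
    (hF : DifferentiableAt ℝ F x) (hc : DifferentiableAt ℝ c x)
    (hHJB : ∀ y, γ * v y =
      F y ⬝ᵥ gradv v y + (1 / 2) * (∑ i, ∑ j, S i j * hess v y i j) + K + c y)
    (i : Fin n) :
    γ * gradv v x i =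
      (∑ j, pd (fun y => F y j) i x * gradv v x j)
        + (∑ j, pd (fun y => gradv v y i) j x * F x j)
        + pd c i x
        + (1 / 2) * pd (divv fun z => S *ᵥ gradv v z) i x := by
  have hv2 : ContDiff ℝ 2 v := hv.of_le (by norm_num)
  have hdivv : (divv fun z => S *ᵥ gradv v z) = fun y => ∑ i, ∑ j, S i j * hess v y i j :=
    funext (divv_mulVec_gradv hv2 S)
  have hdivv_diff : DifferentiableAt ℝ (divv fun z => S *ᵥ gradv v z) x := by
    have hv' : ContDiff ℝ (1 + 2) v := by norm_num [hv]
    rw [hdivv]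
    exact ((ContDiff.sum fun i _ => ContDiff.sum fun j _ =>
      contDiff_const.mul (contDiff_hess hv' i j)).differentiable one_ne_zero) x
  have hdot_diff : DifferentiableAt ℝ (fun y => F y ⬝ᵥ gradv v y) x :=
    DifferentiableAt.fun_sum fun j _ => (differentiableAt_pi.1 hF j).mul
      ((contDiff_pd (m := 1) hv2 j).differentiable one_ne_zero x)
  have hHJB' : (fun y => γ * v y) = fun y =>
      F y ⬝ᵥ gradv v y + (1 / 2) * divv (fun z => S *ᵥ gradv v z) y + K + c y :=
    funext fun y => by rw [hHJB y, hdivv]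
  calc γ * gradv v x i = pd (fun y => γ * v y) i x :=
        (pd_const_mul γ (hv.differentiable (by norm_num) x) i).symm
    _ = pd (fun y => F y ⬝ᵥ gradv v y) i x
          + (1 / 2) * pd (divv fun z => S *ᵥ gradv v z) i x + pd c i x := by
        have hsum := hdot_diff.fun_add (hdivv_diff.const_mul (1 / 2 : ℝ))
        rw [hHJB', pd_add (hsum.add_const K) hc, pd_add hsum (differentiableAt_const K),
          pd_add hdot_diff (hdivv_diff.const_mul _), pd_const_mul _ hdivv_diff, pd_const,
          add_zero]
    _ = _ := by
        rw [pd_dotProduct_gradv hF hv2]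
        ring

end CoState

theorem stmt_4_general (dx du dy : ℕ)
    (v : (Fin dx → ℝ) → ℝ) (hv : ContDiff ℝ 3 v)
    (b : (Fin dx → ℝ) → (Fin dx → ℝ)) (hb : ContDiff ℝ 1 b)
    (G : (Fin dx → ℝ) → Matrix (Fin dx) (Fin du) ℝ)
    (hG : ∀ i j, ContDiff ℝ 1 fun x => G x i j)
    (h : (Fin dx → ℝ) → (Fin dy → ℝ)) (hh : ContDiff ℝ 1 h)
    (c : (Fin dx → ℝ) → ℝ) (hc : ContDiff ℝ 1 c)
    (U : Fin du → ℝ) (m : Fin dy → ℝ)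
    (C : Matrix (Fin dx) (Fin dy) ℝ)
    (R : Matrix (Fin dy) (Fin dy) ℝ)
    (Sig : Matrix (Fin dx) (Fin dx) ℝ)
    (γ : ℝ)
    (f : (Fin dx → ℝ) → (Fin dx → ℝ))
    (hf : ∀ x, f x = b x + (G x).mulVec U - (1 / 2 : ℝ) • (C * R⁻¹).mulVec (h x - m))
    (ψ : (Fin dx → ℝ) → (Fin dx → ℝ)) (hψ : ∀ x, ψ x = gradv v x)
    (hHJB : ∀ x, γ * v x =
      f x ⬝ᵥ gradv v x + (1 / 2) * (∑ i, ∑ j, Sig i j * hess v x i j)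
        + (1 / 2) * (∑ i, (U i) ^ 2) + c x) :
    ∀ x i, γ * ψ x i =
      (∑ j, pd (fun y => f y j) i x * ψ x j)
        + (∑ j, pd (fun y => ψ y i) j x * f x j)
        + pd c i x
        + (1 / 2) * pd (fun y => divv (fun z => Sig.mulVec (ψ z)) y) i x := by
  intro x i
  obtain rfl : ψ = gradv v := funext hψ
  have hf_smooth : ContDiff ℝ 1 f := by
    rw [funext hf]
    exact (hb.add (.matrix_mulVec hG contDiff_const)).sub
      ((ContDiff.matrix_mulVec (A := fun _ => C * R⁻¹) (fun _ _ => contDiff_const)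
        (hh.sub contDiff_const)).const_smul _)
  exact costate_eq_of_hjb hv (hf_smooth.differentiable one_ne_zero x)
    (hc.differentiable one_ne_zero x) hHJB i

/-- data-modified stationary HJB correspondence (Remark 1). With the drift
`f = b + G U − (1/2) C R⁻¹ (h − m)`, the stationary HJB equation
`γ v = fᵀ∇v + (1/2)Σ:D²v + (1/2)‖U‖² + c` implies the stationary co-state equation
`γ ψ = (Df)ᵀψ + (Dψ) f + ∇c + (1/2)∇(∇·(Σψ))` for `ψ = ∇v`. -/
theorem stmt_4 (dx du dy : ℕ)
    (v : (Fin dx → ℝ) → ℝ) (hv : ContDiff ℝ 3 v)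
    (b : (Fin dx → ℝ) → (Fin dx → ℝ)) (hb : ContDiff ℝ 1 b)
    (G : (Fin dx → ℝ) → Matrix (Fin dx) (Fin du) ℝ)
    (hG : ∀ i j, ContDiff ℝ 1 fun x => G x i j)
    (h : (Fin dx → ℝ) → (Fin dy → ℝ)) (hh : ContDiff ℝ 1 h)
    (c : (Fin dx → ℝ) → ℝ) (hc : ContDiff ℝ 1 c)
    (U : Fin du → ℝ) (m : Fin dy → ℝ)
    (C : Matrix (Fin dx) (Fin dy) ℝ)
    (R : Matrix (Fin dy) (Fin dy) ℝ) (hRsymm : R.IsSymm) (hR : R.PosDef)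
    (Sig : Matrix (Fin dx) (Fin dx) ℝ) (hSig : Sig.IsSymm)
    (γ : ℝ)
    (f : (Fin dx → ℝ) → (Fin dx → ℝ))
    (hf : ∀ x, f x = b x + (G x).mulVec U - (1 / 2 : ℝ) • (C * R⁻¹).mulVec (h x - m))
    (ψ : (Fin dx → ℝ) → (Fin dx → ℝ)) (hψ : ∀ x, ψ x = gradv v x)
    (hHJB : ∀ x, γ * v x =
      f x ⬝ᵥ gradv v x + (1 / 2) * (∑ i, ∑ j, Sig i j * hess v x i j)
        + (1 / 2) * (∑ i, (U i) ^ 2) + c x) :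
    ∀ x i, γ * ψ x i =
      (∑ j, pd (fun y => f y j) i x * ψ x j)
        + (∑ j, pd (fun y => ψ y i) j x * f x j)
        + pd c i x
        + (1 / 2) * pd (fun y => divv (fun z => Sig.mulVec (ψ z)) y) i x :=
  stmt_4_general dx du dy v hv b hb G hG h hh c hc U m C R Sig γ f hf ψ hψ hHJB
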